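/- arXiv:2406.06063 — 2 statements merged into one kernel-verified Lean document; each statement's English description precedes it below -/
import Mathlib

section
/- For positive integers b and j with 1 ≤ j ≤ b, the normalized tail of binomial coefficients satisfies (∑_{i=j+1}^{b} C(2b, b+i)) / 2^{2b} ≤ e^{−j²/b}. -/
/-!
Chernoff's method: weighting each `C(n, k)` with `k ≥ n/2 + d` by `e^{t(k - n/2 - d)} ≥ 1` and
summing over all `k` bounds the tail by `e^{-t(n/2 + d)} (e^t + 1)^n`. Since
`e^t + 1 = 2 e^{t/2} cosh(t/2) ≤ 2 e^{t/2 + t²/8}`, this is at most `2^n e^{-td + nt²/8}`, and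
`t = 4d/n` gives `2^n e^{-2d²/n}`. For `n = 2b`, `d = j` this is the claimed bound.
-/

open Finset Real

theorem sum_choose_mul_exp (n : ℕ) (t : ℝ) :
    ∑ k ∈ range (n + 1), (n.choose k : ℝ) * exp (t * k) = (exp t + 1) ^ n := by
  rw [add_pow]
  refine sum_congr rfl fun k _ => ?_
  rw [one_pow, mul_one, mul_comm t, exp_nat_mul, mul_comm]

theorem exp_add_one_le_two_mul_exp (t : ℝ) : exp t + 1 ≤ 2 * exp (t / 2 + t ^ 2 / 8) := by
  have hcosh : exp t + 1 = 2 * exp (t / 2) * cosh (t / 2) := by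
    have hsq : exp t = exp (t / 2) * exp (t / 2) := by rw [← exp_add, add_halves]
    have hinv : exp (t / 2) * exp (-(t / 2)) = 1 := by rw [← exp_add, add_neg_cancel, exp_zero]
    rw [cosh_eq]
    linear_combination hsq - hinv
  calc exp t + 1 = 2 * exp (t / 2) * cosh (t / 2) := hcosh
    _ ≤ 2 * exp (t / 2) * exp ((t / 2) ^ 2 / 2) := by gcongr; exact cosh_le_exp_half_sq _
    _ = 2 * exp (t / 2 + t ^ 2 / 8) := by rw [mul_assoc, ← exp_add]; ring_nf

theorem sum_choose_le_exp_mul_exp_add_one_pow {n : ℕ} {s : Finset ℕ} {a t : ℝ}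
    (hs : s ⊆ range (n + 1)) (ht : 0 ≤ t) (ha : ∀ k ∈ s, a ≤ k) :
    ∑ k ∈ s, (n.choose k : ℝ) ≤ exp (-t * a) * (exp t + 1) ^ n := by
  rw [← sum_choose_mul_exp, mul_sum]
  calc ∑ k ∈ s, (n.choose k : ℝ)
      ≤ ∑ k ∈ s, exp (-t * a) * ((n.choose k : ℝ) * exp (t * k)) := by
        refine sum_le_sum fun k hk => ?_
        have hweight : 1 ≤ exp (-t * a) * exp (t * k) := by
          rw [← exp_add, one_le_exp_iff]
          nlinarith [ha k hk]
        calc (n.choose k : ℝ) ≤ n.choose k * (exp (-t * a) * exp (t * k)) :=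
              le_mul_of_one_le_right (by positivity) hweight
          _ = exp (-t * a) * (n.choose k * exp (t * k)) := by ring
    _ ≤ ∑ k ∈ range (n + 1), exp (-t * a) * ((n.choose k : ℝ) * exp (t * k)) :=
        sum_le_sum_of_subset_of_nonneg hs fun _ _ _ => by positivity

theorem sum_choose_le_two_pow_mul_exp {n : ℕ} {s : Finset ℕ} {d : ℝ}
    (hs : s ⊆ range (n + 1)) (hd : 0 ≤ d) (hsd : ∀ k ∈ s, n / 2 + d ≤ k) :
    ∑ k ∈ s, (n.choose k : ℝ) ≤ 2 ^ n * exp (-2 * d ^ 2 / n) := by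
  set t : ℝ := 4 * d / n
  have hexponent : -t * (n / 2 + d) + n * (t / 2 + t ^ 2 / 8) = -2 * d ^ 2 / n := by
    rcases eq_or_ne (n : ℝ) 0 with hn | hn
    · simp [t, hn]
    · simp only [t]; field_simp; ring
  calc ∑ k ∈ s, (n.choose k : ℝ)
      ≤ exp (-t * (n / 2 + d)) * (exp t + 1) ^ n :=
        sum_choose_le_exp_mul_exp_add_one_pow hs (by positivity) hsd
    _ ≤ exp (-t * (n / 2 + d)) * (2 * exp (t / 2 + t ^ 2 / 8)) ^ n := by
        gcongr; exact exp_add_one_le_two_mul_exp t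
    _ = 2 ^ n * exp (-2 * d ^ 2 / n) := by
        rw [← hexponent, mul_pow, ← exp_nat_mul, exp_add]; ring

theorem stmt7_general (b j : ℕ) :
    (∑ i ∈ Finset.Icc (j + 1) b, ((2 * b).choose (b + i) : ℝ)) / 2 ^ (2 * b) ≤
      Real.exp (-(j : ℝ) ^ 2 / (b : ℝ)) := by
  have hshift : ∑ i ∈ Icc (j + 1) b, ((2 * b).choose (b + i) : ℝ) =
      ∑ k ∈ Icc (b + (j + 1)) (b + b), ((2 * b).choose k : ℝ) := by
    rw [← map_add_left_Icc, sum_map]; rfl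
  have htail := sum_choose_le_two_pow_mul_exp (n := 2 * b) (s := Icc (b + (j + 1)) (b + b))
    (d := j) (fun k hk => by simp only [mem_Icc, mem_range] at hk ⊢; omega) (Nat.cast_nonneg j)
    fun k hk => by
      have hk' : ((b + (j + 1) : ℕ) : ℝ) ≤ k := by exact_mod_cast (mem_Icc.1 hk).1
      push_cast at hk' ⊢
      linarith
  rw [div_le_iff₀ (by positivity), hshift]
  refine htail.trans_eq ?_
  rw [mul_comm]
  congr 2
  push_cast
  ring

/-- Chernoff-type bound on the tail of the symmetric binomial distribution:
`(∑_{i=j+1}^{b} C(2b, b+i)) / 2^{2b} ≤ e^{−j²/b}` for `1 ≤ j ≤ b`. -/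
theorem stmt7 (b j : ℕ) (hj1 : 1 ≤ j) (hjb : j ≤ b) :
    (∑ i ∈ Finset.Icc (j + 1) b, ((2 * b).choose (b + i) : ℝ)) / 2 ^ (2 * b) ≤
      Real.exp (-(j : ℝ) ^ 2 / (b : ℝ)) :=
  stmt7_general b j
end

section
/- Let b and j₀ be positive integers with j₀ ≤ b, and let x ∈ [−1,1]. Then the truncation error of the Chebyshev expansion satisfies |4 ∑_{j=j₀+1}^{b} (−1)^j [(∑_{i=j+1}^{b} C(2b,b+i))/2^{2b}] T_{2j−1}(x)| ≤ 4 b e^{−j₀²/b}. -/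
open Polynomial Finset Real

/-!
The coefficient `(∑_{i > j} C(2b, b+i)) / 4^b` is the probability that a sum of `2b` fair coin
flips exceeds its mean by more than `j`; Hoeffding's inequality (exponential moments with
`cosh y ≤ exp (y^2 / 2)`) bounds it by `exp (-(j+1)^2 / b) ≤ exp (-j₀^2 / b)`. Since `|T_n| ≤ 1`
on `[-1, 1]` and there are at most `b` terms, the bound follows.
-/

-- Chernoff: every `k ≥ m` carries the weight `exp (l * (k - m)) ≥ 1`.
lemma sum_choose_Icc_le_exp_mul_add_one_pow (n m : ℕ) {l : ℝ} (hl : 0 ≤ l) :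
    ∑ k ∈ Icc m n, (n.choose k : ℝ) ≤ exp (-(l * m)) * (exp l + 1) ^ n := by
  rw [add_pow, mul_sum]
  calc ∑ k ∈ Icc m n, (n.choose k : ℝ)
      ≤ ∑ k ∈ Icc m n, exp (-(l * m)) * (exp l ^ k * 1 ^ (n - k) * n.choose k) := by
        refine sum_le_sum fun k hk => ?_
        have hmk : (m : ℝ) ≤ k := by exact_mod_cast (mem_Icc.1 hk).1
        have hweight : 1 ≤ exp (-(l * m)) * exp l ^ k := by
          rw [← exp_nat_mul, ← exp_add, one_le_exp_iff]
          nlinarith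
        rw [one_pow, mul_one, ← mul_assoc]
        exact le_mul_of_one_le_left (by positivity) hweight
    _ ≤ ∑ k ∈ range (n + 1), exp (-(l * m)) * (exp l ^ k * 1 ^ (n - k) * n.choose k) := by
        refine sum_le_sum_of_subset_of_nonneg (fun k hk => ?_) fun _ _ _ => by positivity
        simp only [mem_Icc, mem_range] at hk ⊢
        omega

lemma exp_add_one_le (l : ℝ) : exp l + 1 ≤ 2 * exp (l / 2 + l ^ 2 / 8) := by
  have hcosh : exp l + 1 = 2 * exp (l / 2) * cosh (l / 2) := by
    have hsq : exp l = exp (l / 2) * exp (l / 2) := by rw [← exp_add]; ring_nf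
    have hinv : exp (l / 2) * exp (-(l / 2)) = 1 := by rw [← exp_add]; simp
    rw [cosh_eq, hsq]
    linear_combination -hinv
  calc exp l + 1 = 2 * exp (l / 2) * cosh (l / 2) := hcosh
    _ ≤ 2 * exp (l / 2) * exp ((l / 2) ^ 2 / 2) := by gcongr; exact cosh_le_exp_half_sq _
    _ = 2 * exp (l / 2 + l ^ 2 / 8) := by rw [mul_assoc, ← exp_add]; ring_nf

lemma sum_choose_Icc_le_two_pow_mul_exp {n m : ℕ} (hn : 0 < n) (hm : (n : ℝ) / 2 ≤ m) :
    ∑ k ∈ Icc m n, (n.choose k : ℝ) ≤ 2 ^ n * exp (-2 * (m - n / 2) ^ 2 / n) := by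
  have hn' : (0 : ℝ) < n := by exact_mod_cast hn
  set l : ℝ := 4 * (m - n / 2) / n
  calc ∑ k ∈ Icc m n, (n.choose k : ℝ) ≤ exp (-(l * m)) * (exp l + 1) ^ n :=
        sum_choose_Icc_le_exp_mul_add_one_pow n m (by positivity)
    _ ≤ exp (-(l * m)) * (2 * exp (l / 2 + l ^ 2 / 8)) ^ n := by gcongr; exact exp_add_one_le l
    _ = 2 ^ n * exp (-2 * (m - n / 2) ^ 2 / n) := by
        rw [mul_pow, ← exp_nat_mul, mul_left_comm, ← exp_add]
        congr 2
        simp only [l]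
        field_simp
        ring

lemma sum_choose_two_mul_add_div_le_exp {b : ℕ} (hb : 0 < b) (t : ℕ) :
    (∑ i ∈ Icc t b, ((2 * b).choose (b + i) : ℝ)) / 2 ^ (2 * b) ≤ exp (-(t : ℝ) ^ 2 / b) := by
  have hreindex : ∑ i ∈ Icc t b, ((2 * b).choose (b + i) : ℝ) =
      ∑ k ∈ Icc (b + t) (2 * b), ((2 * b).choose k : ℝ) := by
    rw [two_mul, ← image_add_left_Icc, sum_image fun _ _ _ _ h => Nat.add_left_cancel h]
  have htail := sum_choose_Icc_le_two_pow_mul_exp (n := 2 * b) (m := b + t) (by omega)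
    (by push_cast; linarith [(t.cast_nonneg : (0 : ℝ) ≤ t)])
  have hexponent : -2 * (((b + t : ℕ) : ℝ) - ((2 * b : ℕ) : ℝ) / 2) ^ 2 / ((2 * b : ℕ) : ℝ) =
      -(t : ℝ) ^ 2 / b := by
    push_cast
    field_simp
    ring
  rw [hreindex, div_le_iff₀ (by positivity), mul_comm (exp _)]
  rwa [hexponent] at htail

theorem stmt8_general (b j₀ : ℕ)
    (x : ℝ) (hx : x ∈ Set.Icc (-1 : ℝ) 1) :
    |4 * ∑ j ∈ Finset.Icc (j₀ + 1) b,
        (-1 : ℝ) ^ j *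
          ((∑ i ∈ Finset.Icc (j + 1) b, ((2 * b).choose (b + i) : ℝ)) / 2 ^ (2 * b)) *
          (Polynomial.Chebyshev.T ℝ (2 * (j : ℤ) - 1)).eval x| ≤
      4 * (b : ℝ) * Real.exp (-(j₀ : ℝ) ^ 2 / (b : ℝ)) := by
  have hterm : ∀ j ∈ Icc (j₀ + 1) b,
      |(-1 : ℝ) ^ j * ((∑ i ∈ Icc (j + 1) b, ((2 * b).choose (b + i) : ℝ)) / 2 ^ (2 * b)) *
        (Chebyshev.T ℝ (2 * (j : ℤ) - 1)).eval x| ≤ exp (-(j₀ : ℝ) ^ 2 / b) := by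
    intro j hj
    have hb : 0 < b := by grind
    have hj₀j : (j₀ : ℝ) ≤ (j + 1 : ℕ) := by exact_mod_cast (show j₀ ≤ j + 1 by grind)
    rw [abs_mul, abs_mul, abs_pow, abs_neg, abs_one, one_pow, one_mul, abs_of_nonneg (by positivity)]
    calc _ ≤ (∑ i ∈ Icc (j + 1) b, ((2 * b).choose (b + i) : ℝ)) / 2 ^ (2 * b) * 1 := by
          gcongr; exact Chebyshev.abs_eval_T_real_le_one _ (abs_le.2 hx)
      _ ≤ exp (-((j + 1 : ℕ) : ℝ) ^ 2 / b) := by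
          rw [mul_one]; exact sum_choose_two_mul_add_div_le_exp hb (j + 1)
      _ ≤ exp (-(j₀ : ℝ) ^ 2 / b) := by gcongr
  rw [abs_mul, abs_of_pos four_pos, mul_assoc]
  gcongr
  refine (abs_sum_le_sum_abs _ _).trans ((sum_le_card_nsmul _ _ _ hterm).trans ?_)
  rw [nsmul_eq_mul]
  gcongr
  simp

/-- Truncation error of the Chebyshev expansion:
`|4 ∑_{j=j₀+1}^{b} (−1)^j [(∑_{i=j+1}^b C(2b,b+i))/2^{2b}] T_{2j−1}(x)| ≤ 4 b e^{−j₀²/b}`. -/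
theorem stmt8 (b j₀ : ℕ) (hj₀ : 1 ≤ j₀) (hj₀b : j₀ ≤ b)
    (x : ℝ) (hx : x ∈ Set.Icc (-1 : ℝ) 1) :
    |4 * ∑ j ∈ Finset.Icc (j₀ + 1) b,
        (-1 : ℝ) ^ j *
          ((∑ i ∈ Finset.Icc (j + 1) b, ((2 * b).choose (b + i) : ℝ)) / 2 ^ (2 * b)) *
          (Polynomial.Chebyshev.T ℝ (2 * (j : ℤ) - 1)).eval x| ≤
      4 * (b : ℝ) * Real.exp (-(j₀ : ℝ) ^ 2 / (b : ℝ)) :=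
  stmt8_general b j₀ x hx
end
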